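/- Jacobi's formula: let f(w) = 1 + Σ_{j≥1} θ_j w^j be a formal power series (θ₀ = 1, θ_j = 0 for j < 0), and suppose det(L_{l,m}(f)) ≠ 0 where L_{l,m}(f) is the m×m Toeplitz matrix with (i,j) entry θ_{l+i−j}. Then the leading coefficient p_{l,m,l} of the numerator P_{l,m}(w) = 1 + p_{l,m,1}w + … + p_{l,m,l}w^l of the [l/m] Padé approximant of f satisfies p_{l,m,l} = det(L_{l,m+1}(f)) / det(L_{l,m}(f)). -/

import Mathlib

/-! Since `deg P ≤ l`, the Padé conditions at the orders `l, …, l + m` say that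
`L_{l,m+1}` maps the coefficient vector `(q₀, …, q_m)` of `Q` to `(p_l, 0, …, 0)`. Applying the
adjugate and reading off the first coordinate gives `det L_{l,m+1} · q₀ = p_l · C₀₀`, where the
cofactor `C₀₀` is `det L_{l,m}` because deleting the first row and column of a Toeplitz matrix
leaves a Toeplitz matrix. Finally `q₀ = 1`. -/

open Finset Matrix

/-- The `m × m` Toeplitz matrix `L_{l,m}` with `(i,j)` entry `θ_{l+i-j}`. -/
noncomputable def toeplitzL (θ : ℤ → ℂ) (l m : ℕ) : Matrix (Fin m) (Fin m) ℂ :=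
  Matrix.of fun i j => θ ((l : ℤ) + (i : ℤ) - (j : ℤ))

open Polynomial

theorem Matrix.det_mul_apply_zero_of_mulVec_eq_single {R : Type*} [CommRing R] {n : ℕ}
    (A : Matrix (Fin (n + 1)) (Fin (n + 1)) R) {v : Fin (n + 1) → R} {c : R}
    (h : A *ᵥ v = Pi.single 0 c) : A.det * v 0 = c * (A.submatrix Fin.succ Fin.succ).det := by
  have := congrFun (congrArg (A.adjugate *ᵥ ·) h) 0
  rw [mulVec_mulVec, adjugate_mul, smul_mulVec, one_mulVec, mulVec_single] at this
  simpa [adjugate_fin_succ_eq_det_submatrix, mul_comm] using this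

theorem toeplitzL_submatrix_succ (θ : ℤ → ℂ) (l m : ℕ) :
    (toeplitzL θ l (m + 1)).submatrix Fin.succ Fin.succ = toeplitzL θ l m := by
  ext i j
  simp only [toeplitzL, submatrix_apply, of_apply, Fin.val_succ]
  push_cast
  ring_nf

theorem toeplitzL_mulVec_apply (θ : ℤ → ℂ) (l m : ℕ) (v : ℕ → ℂ) (i : Fin m) :
    (toeplitzL θ l m *ᵥ fun j => v j) i = ∑ j ∈ range m, θ ((l + i : ℕ) - j) * v j := by
  rw [mulVec, dotProduct, ← Fin.sum_univ_eq_sum_range (fun j => θ ((l + i : ℕ) - j) * v j)]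
  simp [toeplitzL]

theorem Polynomial.sum_range_mul_coeff_eq_sum_mul_coeff_sub {R : Type*} [Semiring R]
    {θ : ℤ → R} (hθ : ∀ k : ℤ, k < 0 → θ k = 0) {Q : R[X]} {m : ℕ} (hQ : Q.degree ≤ m)
    (n : ℕ) :
    ∑ j ∈ range (m + 1), θ (n - j) * Q.coeff j = ∑ i ∈ range (n + 1), θ i * Q.coeff (n - i) :=
  calc ∑ j ∈ range (m + 1), θ (n - j) * Q.coeff j
      = ∑ j ∈ range (n + m + 1), θ (n - j) * Q.coeff j := by
        refine sum_subset (range_subset_range.2 (by omega)) fun j _ hj => ?_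
        rw [coeff_eq_zero_of_degree_lt (hQ.trans_lt (by simp_all)), mul_zero]
    _ = ∑ j ∈ range (n + 1), θ (n - j) * Q.coeff j := by
        refine (sum_subset (range_subset_range.2 (by omega)) fun j _ hj => ?_).symm
        rw [hθ _ (by simp_all), zero_mul]
    _ = ∑ i ∈ range (n + 1), θ i * Q.coeff (n - i) := by
        rw [← sum_range_reflect]
        refine sum_congr rfl fun j hj => ?_
        rw [mem_range] at hj
        congr 2
        omega

theorem Polynomial.coeff_add_eq_single_of_degree_le {R : Type*} [Semiring R] {P : R[X]}
    {l : ℕ} (hP : P.degree ≤ l) (m : ℕ) :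
    (fun i : Fin (m + 1) => P.coeff (l + i)) = Pi.single 0 (P.coeff l) := by
  funext i
  rcases eq_or_ne i 0 with rfl | hi
  · simp
  · rw [Pi.single_eq_of_ne hi, coeff_eq_zero_of_degree_lt (hP.trans_lt _)]
    exact_mod_cast Nat.lt_add_of_pos_right (Fin.pos_iff_ne_zero.2 hi)

theorem jacobi_formula_general (θ : ℤ → ℂ) (hθneg : ∀ k : ℤ, k < 0 → θ k = 0)
    (l m : ℕ)
    (P Q : Polynomial ℂ) (hPdeg : P.degree ≤ (l : ℕ)) (hQdeg : Q.degree ≤ (m : ℕ))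
    (hQ0 : Q.coeff 0 = 1)
    (hpade : ∀ n : ℕ, n ≤ l + m →
      (∑ i ∈ Finset.range (n + 1), θ (i : ℤ) * Q.coeff (n - i)) = P.coeff n)
    (hdet : (toeplitzL θ l m).det ≠ 0) :
    P.coeff l = (toeplitzL θ l (m + 1)).det / (toeplitzL θ l m).det := by
  have hmul : toeplitzL θ l (m + 1) *ᵥ (fun j => Q.coeff j) = Pi.single 0 (P.coeff l) := by
    rw [← coeff_add_eq_single_of_degree_le hPdeg]
    funext i
    rw [toeplitzL_mulVec_apply, sum_range_mul_coeff_eq_sum_mul_coeff_sub hθneg hQdeg,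
      hpade _ (by omega)]
  have h := (toeplitzL θ l (m + 1)).det_mul_apply_zero_of_mulVec_eq_single hmul
  rw [toeplitzL_submatrix_succ, Fin.val_zero, hQ0, mul_one] at h
  exact eq_div_of_mul_eq hdet h.symm

theorem jacobi_formula (θ : ℤ → ℂ) (hθ0 : θ 0 = 1) (hθneg : ∀ k : ℤ, k < 0 → θ k = 0)
    (l m : ℕ)
    (P Q : Polynomial ℂ) (hPdeg : P.degree ≤ (l : ℕ)) (hQdeg : Q.degree ≤ (m : ℕ))
    (hP0 : P.coeff 0 = 1) (hQ0 : Q.coeff 0 = 1)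
    (hpade : ∀ n : ℕ, n ≤ l + m →
      (∑ i ∈ Finset.range (n + 1), θ (i : ℤ) * Q.coeff (n - i)) = P.coeff n)
    (hdet : (toeplitzL θ l m).det ≠ 0) :
    P.coeff l = (toeplitzL θ l (m + 1)).det / (toeplitzL θ l m).det :=
  jacobi_formula_general θ hθneg l m P Q hPdeg hQdeg hQ0 hpade hdet
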